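/- In the group G = ⟨x, y | xy = (yx)²⟩, the element xy is not equal to the identity. -/

import Mathlib

/-- The single relator `x * y * ((y*x)^2)⁻¹` for the presentation `⟨x, y | xy = (yx)²⟩`. -/
def corkRels : Set (FreeGroup (Fin 2)) :=
  {FreeGroup.of 0 * FreeGroup.of 1 * ((FreeGroup.of 1 * FreeGroup.of 0) ^ 2)⁻¹}

section CorkLift

variable {H : Type*} [Group H] {a b : H}

lemma lift_eq_one_of_mem_corkRels (hab : a * b = (b * a) ^ 2) :
    ∀ r ∈ corkRels, FreeGroup.lift ![a, b] r = 1 := by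
  rintro r rfl
  simp [hab]

def corkLift (hab : a * b = (b * a) ^ 2) : PresentedGroup corkRels →* H :=
  PresentedGroup.toGroup (lift_eq_one_of_mem_corkRels hab)

lemma corkLift_of_mul_of (hab : a * b = (b * a) ^ 2) :
    corkLift hab (PresentedGroup.of 0 * PresentedGroup.of 1) = a * b := by
  simp [corkLift]

end CorkLift

-- `(0 1)(1 2)` is a 3-cycle and `(1 2)(0 1)` its inverse, whose square is `(0 1)(1 2)` again.
lemma swap_mul_swap_eq_sq_swap_mul_swap :
    Equiv.swap (0 : Fin 3) 1 * Equiv.swap 1 2 = (Equiv.swap 1 2 * Equiv.swap 0 1) ^ 2 := by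
  decide

lemma swap_mul_swap_ne_one : Equiv.swap (0 : Fin 3) 1 * Equiv.swap 1 2 ≠ 1 := by
  decide

/-- In the group `G = ⟨x, y | xy = (yx)²⟩`, the element `xy` is not the identity. -/
theorem xy_ne_one_in_cork_group :
    (PresentedGroup.of 0 * PresentedGroup.of 1 : PresentedGroup corkRels) ≠ 1 := by
  apply ne_one_of_map (f := corkLift swap_mul_swap_eq_sq_swap_mul_swap)
  rw [corkLift_of_mul_of]
  exact swap_mul_swap_ne_one
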